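/- Let X and Y be finite types and let p be a strictly positive probability mass function on (X×Y)^{k+2} satisfying the bipartite Markov property. Then the multi-time-step transfer entropy is bounded above by the single-time-step transfer entropy: I(X_k : Y_{k+1} | (Y_0,…,Y_k)) ≤ I(X_k : Y_{k+1} | Y_k). (Discrete-time form of the hierarchy inequality T̄_{X→Y} ≥ T_{X→Y} of Eq. (14).) -/

import Mathlib

open Finset

/-- Marginal (pushforward) of a pmf `p` on `Ω` along an observable `f`. -/
def margin {Ω α : Type*} [Fintype Ω] [DecidableEq α] (p : Ω → ℝ) (f : Ω → α) (a : α) : ℝ :=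
  ∑ ω : Ω, if f ω = a then p ω else 0

/-- Conditional probability `p(a | b)` of observable `f` given observable `g`. -/
noncomputable def condProb {Ω α β : Type*} [Fintype Ω] [DecidableEq α] [DecidableEq β]
    (p : Ω → ℝ) (f : Ω → α) (g : Ω → β) (a : α) (b : β) : ℝ :=
  margin p (fun ω => (f ω, g ω)) (a, b) / margin p g b

/-- Mutual information `I(f : g)` of observables `f` and `g`. -/
noncomputable def mutualInfo {Ω α β : Type*} [Fintype Ω] [Fintype α] [Fintype β]
    [DecidableEq α] [DecidableEq β] (p : Ω → ℝ) (f : Ω → α) (g : Ω → β) : ℝ :=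
  ∑ a : α, ∑ b : β,
    margin p (fun ω => (f ω, g ω)) (a, b) *
      Real.log (margin p (fun ω => (f ω, g ω)) (a, b) / (margin p f a * margin p g b))

/-- Conditional mutual information `I(f : g | h)` of observables `f`, `g` given `h`. -/
noncomputable def condMI {Ω α β γ : Type*} [Fintype Ω] [Fintype α] [Fintype β] [Fintype γ]
    [DecidableEq α] [DecidableEq β] [DecidableEq γ]
    (p : Ω → ℝ) (f : Ω → α) (g : Ω → β) (h : Ω → γ) : ℝ :=
  ∑ a : α, ∑ b : β, ∑ c : γ,
    margin p (fun ω => (f ω, g ω, h ω)) (a, b, c) *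
      Real.log ((margin p (fun ω => (f ω, g ω, h ω)) (a, b, c) / margin p h c) /
        ((margin p (fun ω => (f ω, h ω)) (a, c) / margin p h c) *
          (margin p (fun ω => (g ω, h ω)) (b, c) / margin p h c)))

/-- The bipartite Markov property for a pmf on trajectories `(x_0,y_0),…,(x_{k+1},y_{k+1})`:
for every `0 ≤ j ≤ k`,
`p(x_{j+1}, y_{j+1} | x_0,…,x_j, y_0,…,y_j) = p(x_{j+1} | x_j, y_j) · p(y_{j+1} | x_j, y_j)`. -/
def BipartiteMarkov {X Y : Type*} [Fintype X] [Fintype Y] [DecidableEq X] [DecidableEq Y]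
    (k : ℕ) (p : (Fin (k + 2) → X × Y) → ℝ) : Prop :=
  ∀ j : Fin (k + 1), ∀ h : Fin (j.1 + 1) → X × Y, ∀ x' : X, ∀ y' : Y,
    condProb p (fun t => t j.succ)
        (fun t (i : Fin (j.1 + 1)) => t (Fin.castLE (Nat.succ_le_succ j.isLt.le) i))
        (x', y') h =
      condProb p (fun t => (t j.succ).1) (fun t => t j.castSucc) x' (h (Fin.last j.1)) *
        condProb p (fun t => (t j.succ).2) (fun t => t j.castSucc) y' (h (Fin.last j.1))


/-!
Write `A = X_k`, `B = Y_{k+1}`, `H = (Y_0, …, Y_k)` and `Z h = h_k`, so that the right-hand side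
conditions on `Z ∘ H`. By the bipartite Markov property at the last step, the conditional law of
`B` given `(A, H)` is `p(y_{k+1} | x_k, y_k)`, which depends on `H` only through `Z ∘ H`; hence it
is also the conditional law of `B` given `(A, Z ∘ H)`. Pointwise, the two log-ratios in the
conditional mutual informations then differ by `log (p(b, h) p(Z h) / (p(b, Z h) p(h)))`, whose
expectation is `I(B : H | Z ∘ H) ≥ 0` by Gibbs' inequality.
-/

section Margin

variable {Ω α β γ δ : Type*} [Fintype Ω]

theorem margin_congr [DecidableEq α] [DecidableEq β] (p : Ω → ℝ) {f : Ω → α} {g : Ω → β}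
    {a : α} {b : β} (h : ∀ ω, f ω = a ↔ g ω = b) : margin p f a = margin p g b :=
  Finset.sum_congr rfl fun ω _ => by simp only [h]

theorem margin_nonneg [DecidableEq α] {p : Ω → ℝ} (hp : ∀ ω, 0 ≤ p ω) (f : Ω → α) (a : α) :
    0 ≤ margin p f a :=
  Finset.sum_nonneg fun ω _ => by split_ifs <;> simp [hp ω]

theorem margin_pos_apply [DecidableEq α] {p : Ω → ℝ} (hp : ∀ ω, 0 < p ω) (f : Ω → α) (ω : Ω) :
    0 < margin p f (f ω) :=
  Finset.sum_pos' (fun ω' _ => by split_ifs <;> simp [(hp ω').le])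
    ⟨ω, Finset.mem_univ _, by simp [hp ω]⟩

theorem margin_left_comm [DecidableEq α] [DecidableEq β] [DecidableEq γ] (p : Ω → ℝ)
    (f : Ω → α) (g : Ω → β) (h : Ω → γ) (a : α) (b : β) (c : γ) :
    margin p (fun ω => (f ω, g ω, h ω)) (a, b, c) = margin p (fun ω => (g ω, f ω, h ω)) (b, a, c) :=
  margin_congr p fun ω => by simp only [Prod.mk.injEq]; tauto

theorem sum_margin_mul [Fintype α] [DecidableEq α] (p : Ω → ℝ) (f : Ω → α) (G : α → ℝ) :
    ∑ a, margin p f a * G a = ∑ ω, p ω * G (f ω) := by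
  simp only [margin, Finset.sum_mul, ite_mul, zero_mul]
  rw [Finset.sum_comm]
  simp

theorem sum_margin [Fintype α] [DecidableEq α] (p : Ω → ℝ) (f : Ω → α) :
    ∑ a, margin p f a = ∑ ω, p ω := by
  simpa using sum_margin_mul p f 1

theorem margin_margin [Fintype α] [DecidableEq α] [DecidableEq β] (p : Ω → ℝ) (f : Ω → α)
    (g : α → β) (b : β) : margin (margin p f) g b = margin p (fun ω => g (f ω)) b := by
  simpa [margin] using sum_margin_mul p f fun a => if g a = b then 1 else 0

theorem sum_margin_prod_left [Fintype α] [DecidableEq α] [DecidableEq γ] (p : Ω → ℝ)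
    (f : Ω → α) (g : Ω → γ) (c : γ) :
    ∑ a, margin p (fun ω => (f ω, g ω)) (a, c) = margin p g c := by
  simp only [margin, Prod.mk.injEq]
  rw [Finset.sum_comm]
  simp [ite_and]

theorem sum_condProb [Fintype α] [DecidableEq α] [DecidableEq γ] (p : Ω → ℝ) (f : Ω → α)
    (g : Ω → γ) {c : γ} (hc : margin p g c ≠ 0) : ∑ a, condProb p f g a c = 1 := by
  simp only [condProb, ← Finset.sum_div, sum_margin_prod_left, div_self hc]

theorem margin_prod_comp_eq_mul [Fintype β] [Fintype γ] [DecidableEq β] [DecidableEq γ]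
    [DecidableEq δ]
    (p : Ω → ℝ) (f : Ω → β) (g : Ω → γ) (G : γ → δ) (κ : δ → β → ℝ)
    (h : ∀ b c, margin p (fun ω => (f ω, g ω)) (b, c) = κ (G c) b * margin p g c)
    (b : β) (d : δ) :
    margin p (fun ω => (f ω, G (g ω))) (b, d) = κ d b * margin p (fun ω => G (g ω)) d := by
  rw [← margin_margin p (fun ω => (f ω, g ω)) (fun x => (x.1, G x.2)),
    ← margin_margin p g G, margin, margin, Finset.mul_sum, Fintype.sum_prod_type]
  simp only [Prod.mk.injEq, ite_and]
  rw [Finset.sum_comm]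
  simp only [Finset.sum_ite_eq', Finset.mem_univ, if_true]
  refine Finset.sum_congr rfl fun c _ => ?_
  split_ifs with hc
  · rw [h, hc]
  · rw [mul_zero]

theorem sum_margin_prod_comp_mul_div_le [Fintype β] [Fintype γ] [DecidableEq β] [DecidableEq γ]
    [DecidableEq δ] {p : Ω → ℝ} (hp : ∀ ω, 0 ≤ p ω) (B : Ω → β) (H : Ω → γ) (Z : γ → δ) :
    ∑ x : β × γ, margin p (fun ω => (B ω, Z (H ω))) (x.1, Z x.2) * margin p H x.2 /
      margin p (fun ω => Z (H ω)) (Z x.2) ≤ ∑ ω, p ω :=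
  calc _ = ∑ h, margin p H h *
        (margin p (fun ω => Z (H ω)) (Z h) / margin p (fun ω => Z (H ω)) (Z h)) := by
        rw [Fintype.sum_prod_type, Finset.sum_comm]
        refine Finset.sum_congr rfl fun h _ => ?_
        dsimp only
        rw [← Finset.sum_div, ← Finset.sum_mul, sum_margin_prod_left]
        ring
    _ ≤ ∑ h, margin p H h := Finset.sum_le_sum fun h _ =>
        mul_le_of_le_one_right (margin_nonneg hp H h) (div_self_le_one _)
    _ = _ := sum_margin p H

end Margin

theorem sum_mul_log_div_nonneg {ι : Type*} [Fintype ι] {u v : ι → ℝ} (hu : ∀ i, 0 < u i)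
    (hv : ∀ i, 0 < v i) (h : ∑ i, v i ≤ ∑ i, u i) : 0 ≤ ∑ i, u i * Real.log (u i / v i) := by
  calc 0 ≤ ∑ i, (u i - v i) := by rw [Finset.sum_sub_distrib]; linarith
    _ ≤ ∑ i, u i * Real.log (u i / v i) := Finset.sum_le_sum fun i _ => by
      have hlog := Real.one_sub_inv_le_log_of_pos (div_pos (hu i) (hv i))
      calc u i - v i = u i * (1 - (u i / v i)⁻¹) := by field_simp [(hu i).ne']
        _ ≤ _ := mul_le_mul_of_nonneg_left hlog (hu i).le

theorem condMI_eq_sum {Ω α β γ : Type*} [Fintype Ω] [Fintype α] [Fintype β] [Fintype γ]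
    [DecidableEq α] [DecidableEq β] [DecidableEq γ]
    (p : Ω → ℝ) (f : Ω → α) (g : Ω → β) (h : Ω → γ) :
    condMI p f g h = ∑ ω, p ω * Real.log
      ((margin p (fun ω => (f ω, g ω, h ω)) (f ω, g ω, h ω) / margin p h (h ω)) /
        ((margin p (fun ω => (f ω, h ω)) (f ω, h ω) / margin p h (h ω)) *
          (margin p (fun ω => (g ω, h ω)) (g ω, h ω) / margin p h (h ω)))) := by
  have := sum_margin_mul p (fun ω => (f ω, g ω, h ω)) fun x =>
    Real.log ((margin p (fun ω => (f ω, g ω, h ω)) x / margin p h x.2.2) /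
      ((margin p (fun ω => (f ω, h ω)) (x.1, x.2.2) / margin p h x.2.2) *
        (margin p (fun ω => (g ω, h ω)) x.2 / margin p h x.2.2)))
  rw [condMI]
  simpa only [Fintype.sum_prod_type] using this

theorem condMI_le_condMI_comp {Ω α β γ δ : Type*} [Fintype Ω] [Fintype α] [Fintype β]
    [Fintype γ] [Fintype δ] [DecidableEq α] [DecidableEq β] [DecidableEq γ] [DecidableEq δ]
    {p : Ω → ℝ} (hpos : ∀ ω, 0 < p ω) (A : Ω → α) (B : Ω → β) (H : Ω → γ) (Z : γ → δ)
    (hBH : Function.Surjective fun ω => (B ω, H ω)) (κ : α × δ → β → ℝ)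
    (hκ : ∀ b a h, margin p (fun ω => (B ω, A ω, H ω)) (b, a, h) =
      κ (a, Z h) b * margin p (fun ω => (A ω, H ω)) (a, h)) :
    condMI p A B H ≤ condMI p A B (fun ω => Z (H ω)) := by
  have hκZ : ∀ b a d, margin p (fun ω => (B ω, A ω, Z (H ω))) (b, a, d) =
      κ (a, d) b * margin p (fun ω => (A ω, Z (H ω))) (a, d) := fun b a d =>
    margin_prod_comp_eq_mul p B (fun ω => (A ω, H ω)) (fun c => (c.1, Z c.2)) κ
      (fun b c => hκ b c.1 c.2) b (a, d)
  set v : β × γ → ℝ := fun x => margin p (fun ω => (B ω, Z (H ω))) (x.1, Z x.2) *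
    margin p H x.2 / margin p (fun ω => Z (H ω)) (Z x.2) with hv
  have hpos_BH : ∀ x, 0 < margin p (fun ω => (B ω, H ω)) x := fun x => by
    obtain ⟨ω, rfl⟩ := hBH x
    exact margin_pos_apply hpos _ ω
  have hpos_v : ∀ x, 0 < v x := fun x => by
    obtain ⟨ω, rfl⟩ := hBH x
    have := margin_pos_apply hpos (fun ω => (B ω, Z (H ω))) ω
    have := margin_pos_apply hpos H ω
    have := margin_pos_apply hpos (fun ω => Z (H ω)) ω
    positivity
  have hsum_v : ∑ x, v x ≤ ∑ x, margin p (fun ω => (B ω, H ω)) x := by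
    rw [sum_margin]
    exact sum_margin_prod_comp_mul_div_le (fun ω => (hpos ω).le) B H Z
  rw [← sub_nonneg, condMI_eq_sum, condMI_eq_sum, ← Finset.sum_sub_distrib]
  calc 0 ≤ ∑ x, margin p (fun ω => (B ω, H ω)) x *
        Real.log (margin p (fun ω => (B ω, H ω)) x / v x) :=
      sum_mul_log_div_nonneg hpos_BH hpos_v hsum_v
    _ = _ := by
      rw [sum_margin_mul]
      refine Finset.sum_congr rfl fun ω _ => ?_
      have hABH : margin p (fun ω => (A ω, B ω, H ω)) (A ω, B ω, H ω) =
          κ (A ω, Z (H ω)) (B ω) * margin p (fun ω => (A ω, H ω)) (A ω, H ω) :=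
        (margin_left_comm ..).trans (hκ ..)
      have hABZ : margin p (fun ω => (A ω, B ω, Z (H ω))) (A ω, B ω, Z (H ω)) =
          κ (A ω, Z (H ω)) (B ω) * margin p (fun ω => (A ω, Z (H ω))) (A ω, Z (H ω)) :=
        (margin_left_comm ..).trans (hκZ ..)
      have hAH := margin_pos_apply hpos (fun ω => (A ω, H ω)) ω
      have hAZ := margin_pos_apply hpos (fun ω => (A ω, Z (H ω))) ω
      have hBZ := margin_pos_apply hpos (fun ω => (B ω, Z (H ω))) ω
      have hBH := hpos_BH (B ω, H ω)
      have hH := margin_pos_apply hpos H ω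
      have hZ := margin_pos_apply hpos (fun ω => Z (H ω)) ω
      have hκpos : 0 < κ (A ω, Z (H ω)) (B ω) :=
        pos_of_mul_pos_left (hABH ▸ margin_pos_apply hpos _ ω) hAH.le
      rw [hABH, hABZ, ← mul_sub, ← Real.log_div (by positivity) (by positivity), hv]
      congr 2
      field_simp

namespace BipartiteMarkov

variable {X Y : Type*} [Fintype X] [Fintype Y] [DecidableEq X] [DecidableEq Y] {k : ℕ}
  {p : (Fin (k + 2) → X × Y) → ℝ}

theorem margin_snd_last_init (hpos : ∀ ω, 0 < p ω) (hbip : BipartiteMarkov k p) (y : Y)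
    (r : Fin (k + 1) → X × Y) :
    margin p (fun t => ((t (Fin.last (k + 1))).2, Fin.init t)) (y, r) =
      condProb p (fun t => (t (Fin.last (k + 1))).2) (fun t => t (Fin.last k).castSucc) y
        (r (Fin.last k)) * margin p Fin.init r := by
  have hr : margin p Fin.init r ≠ 0 := by
    simpa only [Fin.init_snoc] using (margin_pos_apply hpos Fin.init (Fin.snoc r (r 0))).ne'
  have hz : margin p (fun t => t (Fin.last k).castSucc) (r (Fin.last k)) ≠ 0 :=
    (margin_pos_apply hpos (fun t => t (Fin.last k).castSucc) fun _ => r (Fin.last k)).ne'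
  rw [← sum_margin_prod_left p fun t => (t (Fin.last (k + 1))).1]
  calc ∑ x, margin p (fun t => ((t (Fin.last (k + 1))).1, (t (Fin.last (k + 1))).2, Fin.init t))
          (x, y, r)
      = ∑ x, condProb p (fun t => t (Fin.last (k + 1))) Fin.init (x, y) r *
          margin p Fin.init r := Finset.sum_congr rfl fun x _ => by
        rw [condProb, div_mul_cancel₀ _ hr]
        exact margin_congr p fun t => by simp [Prod.ext_iff, and_assoc]
    _ = ∑ x, condProb p (fun t => (t (Fin.last (k + 1))).1) (fun t => t (Fin.last k).castSucc) x
          (r (Fin.last k)) * condProb p (fun t => (t (Fin.last (k + 1))).2)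
            (fun t => t (Fin.last k).castSucc) y (r (Fin.last k)) * margin p Fin.init r :=
      Finset.sum_congr rfl fun x _ => congrArg (· * _) (hbip (Fin.last k) r x y)
    _ = _ := by rw [← Finset.sum_mul, ← Finset.sum_mul, sum_condProb p _ _ hz, one_mul]

theorem margin_snd_last_fst_snd (hpos : ∀ ω, 0 < p ω) (hbip : BipartiteMarkov k p) (y : Y)
    (a : X) (h : Fin (k + 1) → Y) :
    margin p (fun t => ((t (Fin.last (k + 1))).2, (t (Fin.last k).castSucc).1,
        fun i => (t i.castSucc).2)) (y, a, h) =
      condProb p (fun t => (t (Fin.last (k + 1))).2) (fun t => t (Fin.last k).castSucc) y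
          (a, h (Fin.last k)) *
        margin p (fun t => ((t (Fin.last k).castSucc).1, fun i => (t i.castSucc).2)) (a, h) :=
  margin_prod_comp_eq_mul p _ Fin.init (fun r => ((r (Fin.last k)).1, fun i => (r i).2))
    (fun s y => condProb p (fun t => (t (Fin.last (k + 1))).2) (fun t => t (Fin.last k).castSucc)
      y (s.1, s.2 (Fin.last k))) (hbip.margin_snd_last_init hpos) y (a, h)

end BipartiteMarkov

/-- Discrete-time form of the hierarchy inequality (Eq. (14)): for a strictly positive pmf on
trajectories satisfying the bipartite Markov property, the multi-time-step transfer entropy is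
bounded above by the single-time-step transfer entropy:
`I(X_k : Y_{k+1} | (Y_0,…,Y_k)) ≤ I(X_k : Y_{k+1} | Y_k)`. -/
theorem multi_transfer_le_single_transfer {X Y : Type*} [Fintype X] [Fintype Y]
    [DecidableEq X] [DecidableEq Y] (k : ℕ)
    (p : (Fin (k + 2) → X × Y) → ℝ)
    (hpos : ∀ ω, 0 < p ω)
    (hbip : BipartiteMarkov k p) :
    condMI p (fun t => (t ⟨k, by omega⟩).1) (fun t => (t (Fin.last (k + 1))).2)
        (fun t (i : Fin (k + 1)) => (t i.castSucc).2) ≤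
      condMI p (fun t => (t ⟨k, by omega⟩).1) (fun t => (t (Fin.last (k + 1))).2)
        (fun t => (t ⟨k, by omega⟩).2) := by
  rcases isEmpty_or_nonempty X with _ | ⟨⟨x₀⟩⟩
  · simp [condMI]
  have hsurj : Function.Surjective fun t : Fin (k + 2) → X × Y =>
      ((t (Fin.last (k + 1))).2, fun i : Fin (k + 1) => (t i.castSucc).2) := by
    rintro ⟨b, h⟩
    exact ⟨Fin.snoc (fun i => (x₀, h i)) (x₀, b), by simp⟩
  have key := condMI_le_condMI_comp hpos (fun t => (t (Fin.last k).castSucc).1) _ _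
    (fun h => h (Fin.last k)) hsurj
    (fun s y => condProb p (fun t => (t (Fin.last (k + 1))).2) (fun t => t (Fin.last k).castSucc)
      y s)
    (hbip.margin_snd_last_fst_snd hpos)
  exact key
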